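/- For the two-species controlled Lotka-Volterra system with discrete delays, assume condition (5.2): det M > 0 and λ_i + a_{ii} > 0 for i = 1,2. If b_1 ≤ 0 and b_2 ≤ 0, then (0,0,0,0) is the saturated equilibrium; in this case, if μ_i − a_{ii}^- ≥ 0 for i = 1,2 and (μ_1 − a_{11}^-)(μ_2 − a_{22}^-) ≥ a_{12}^- a_{21}^-, then every admissible solution (x_1, u_1, x_2, u_2) satisfies x_i(t) → 0 and u_i(t) → 0 as t → ∞ (i = 1,2). -/

import Mathlib

open MeasureTheory Filter Topology

noncomputable section

/-- An admissible solution of the two-species controlled Lotka-Volterra system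
(5.1) with discrete delays: continuous, nonnegative, bounded on `(-∞,0]`, positive
at `0`, and satisfying the system on `(0,∞)`. -/
def AdmissibleSolution2 (b1 b2 mu1 mu2 a11 a12 a21 a22 c10 c11 c20 c21
    d1 d2 e1 e2 t11 t12 t21 t22 s1 s2 : ℝ) (x1 u1 x2 u2 : ℝ → ℝ) : Prop :=
  Continuous x1 ∧ Continuous u1 ∧ Continuous x2 ∧ Continuous u2 ∧
  (∀ t, 0 ≤ x1 t ∧ 0 ≤ u1 t ∧ 0 ≤ x2 t ∧ 0 ≤ u2 t) ∧
  (∃ B : ℝ, ∀ t ≤ (0:ℝ), x1 t ≤ B ∧ u1 t ≤ B ∧ x2 t ≤ B ∧ u2 t ≤ B) ∧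
  0 < x1 0 ∧ 0 < u1 0 ∧ 0 < x2 0 ∧ 0 < u2 0 ∧
  (∀ t, 0 < t → HasDerivAt x1
    (x1 t * (b1 - mu1 * x1 t - a11 * x1 (t - t11) - a12 * x2 (t - t12)
      - c10 * u1 t - c11 * u1 (t - s1))) t) ∧
  (∀ t, 0 < t → HasDerivAt u1 (-e1 * u1 t + d1 * x1 t) t) ∧
  (∀ t, 0 < t → HasDerivAt x2
    (x2 t * (b2 - mu2 * x2 t - a21 * x1 (t - t21) - a22 * x2 (t - t22)
      - c20 * u2 t - c21 * u2 (t - s2))) t) ∧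
  (∀ t, 0 < t → HasDerivAt u2 (-e2 * u2 t + d2 * x2 t) t)

/-- A saturated equilibrium of the planar system (5.1), where
`l1 = μ₁ + c₁d₁/e₁`, `l2 = μ₂ + c₂d₂/e₂` and the community matrix is
`M = [[l1 + a11, a12], [a21, l2 + a22]]`. -/
def SaturatedEquilibrium2 (l1 l2 a11 a12 a21 a22 b1 b2 d1 d2 e1 e2 : ℝ)
    (y1 v1 y2 v2 : ℝ) : Prop :=
  0 ≤ y1 ∧ 0 ≤ y2 ∧ v1 = d1 / e1 * y1 ∧ v2 = d2 / e2 * y2 ∧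
  ((0 < y1 ∧ (l1 + a11) * y1 + a12 * y2 = b1) ∨
    (y1 = 0 ∧ b1 ≤ (l1 + a11) * y1 + a12 * y2)) ∧
  ((0 < y2 ∧ a21 * y1 + (l2 + a22) * y2 = b2) ∨
    (y2 = 0 ∧ b2 ≤ a21 * y1 + (l2 + a22) * y2))

/-!
Each species obeys `x' = x g` with `g ≤ P - μ x + A x(t - τ) - c u`, where `A = aᵢᵢ⁻` and,
since `bᵢ ≤ 0`, the input `P` is at most `aᵢⱼ⁻ xⱼ(t - τᵢⱼ)`. The control solves
`u' = -e u + d x`, hence `d ∫_{t-1-τ}^t x ≤ e^{e(1+τ)} u(t)`: where `u(t)` is small, `x` was small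
somewhere in `[t - 1, t]`, and integrating `g` shows that `x(t)` is small too.

At a running maximum of `x` we have `g ≥ 0`, which bounds `u`. This gives boundedness of `xᵢ`
whenever `xⱼ` is bounded, and, comparing the running maxima of both species with the condition
`aᵢⱼ⁻ aⱼᵢ⁻ ≤ (μ₁ - a₁₁⁻)(μ₂ - a₂₂⁻)`, that one of them (hence both) is bounded. At times where `x`
is close to `L = limsup x` and not decreasing fast, `u = O(ε)`; so `L = 0` as soon as
`aᵢⱼ⁻ Lⱼ ≤ (μᵢ - aᵢᵢ⁻) Lᵢ`, and the same condition on the limsups gives `L₁ = L₂ = 0`.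
-/

open Set

theorem HasDerivAt.nonneg_of_isMaxOn_Iic {f : ℝ → ℝ} {f' t : ℝ} (hf : HasDerivAt f f' t)
    (hmax : IsMaxOn f (Iic t) t) : 0 ≤ f' := by
  have hcone : (-1 : ℝ) ∈ posTangentConeAt (Iic t) t :=
    mem_posTangentConeAt_of_segment_subset <| by
      rw [segment_eq_uIcc, uIcc_of_ge (by linarith)]
      exact Icc_subset_Iic_self
  simpa using hmax.localize.hasFDerivWithinAt_nonpos hf.hasFDerivAt.hasFDerivWithinAt hcone

theorem Continuous.exists_isMaxOn_Iic {x : ℝ → ℝ} (hx : Continuous x) {B s T : ℝ}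
    (hB : ∀ t ≤ 0, x t ≤ B) (hsT : s ≤ T) (hs : B < x s) :
    ∃ t ∈ Ioc 0 T, IsMaxOn x (Iic T) t := by
  have hT : 0 ≤ T := by
    by_contra! h
    exact (hB s (hsT.trans h.le)).not_gt hs
  obtain ⟨m, hm, hmax⟩ := isCompact_Icc.exists_isMaxOn (nonempty_Icc.2 hT) hx.continuousOn
  have hBm : B < x m := by
    by_cases hs0 : s ≤ 0
    · exact (hB s hs0 |>.not_gt hs).elim
    · exact hs.trans_le (hmax ⟨(not_le.1 hs0).le, hsT⟩)
  refine ⟨m, ⟨lt_of_le_of_ne hm.1 ?_, hm.2⟩, isMaxOn_iff.2 fun r hr => ?_⟩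
  · rintro rfl
    exact (hB 0 le_rfl).not_gt hBm
  · rcases le_or_gt r 0 with hr0 | hr0
    · exact (hB r hr0).trans hBm.le
    · exact hmax ⟨hr0.le, hr⟩

theorem frequently_lt_and_neg_le_deriv {f f' : ℝ → ℝ} {c ε : ℝ} (hε : 0 < ε)
    (hf : ∀ᶠ t in atTop, HasDerivAt f (f' t) t) (hc : ∃ᶠ t in atTop, c < f t) :
    ∃ᶠ t in atTop, c < f t ∧ -ε ≤ f' t := by
  by_contra hcon
  rw [not_frequently] at hcon
  obtain ⟨T, hT⟩ := eventually_atTop.1 (hf.and hcon)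
  have hdecr : ∀ r ≥ T, c < f r → f' r < -ε := fun r hr hcr =>
    not_le.1 fun h => (hT r hr).2 ⟨hcr, h⟩
  have hcont : ∀ a b, T ≤ a → ContinuousOn f (Icc a b) := fun a b ha r hr =>
    (hT r (ha.trans hr.1)).1.continuousAt.continuousWithinAt
  have hderiv : ∀ a b, T ≤ a → ∀ r ∈ Ico a b, HasDerivWithinAt f (f' r) (Ici r) r :=
    fun a b ha r hr => (hT r (ha.trans hr.1)).1.hasDerivWithinAt
  obtain ⟨t₀, ht₀, hct₀⟩ := frequently_atTop.1 hc T
  -- above `c`, `f` decreases at rate at least `ε`, so it reaches `c` by time `t₁`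
  set t₁ := t₀ + (f t₀ - c) / ε
  have hslope : ε * (t₁ - t₀) = f t₀ - c := by
    rw [show t₁ - t₀ = (f t₀ - c) / ε by ring, mul_div_cancel₀ _ hε.ne']
  have ht₀₁ : t₀ ≤ t₁ := by nlinarith
  have hdrop : f t₁ ≤ c := by
    have h := image_le_of_deriv_right_lt_deriv_boundary (hcont t₀ t₁ ht₀) (hderiv t₀ t₁ ht₀)
      (B := fun r => f t₀ - ε * (r - t₀)) (B' := fun _ => -ε) (by simp)
      (fun r => by simpa using ((hasDerivAt_id r).sub_const t₀).const_mul ε |>.const_sub (f t₀))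
      (fun r hr hfr => hdecr r (ht₀.trans hr.1) <| by
        rw [hfr]; nlinarith [mul_lt_mul_of_pos_left hr.2 hε])
      ⟨ht₀₁, le_rfl⟩
    linarith
  -- and once at or below `c`, it can never climb back above `c`
  obtain ⟨t₂, ht₂, hct₂⟩ := frequently_atTop.1 hc t₁
  have h := image_le_of_deriv_right_lt_deriv_boundary (hcont t₁ t₂ (ht₀.trans ht₀₁))
    (hderiv t₁ t₂ (ht₀.trans ht₀₁)) (B := fun _ => (c + f t₂) / 2) (B' := fun _ => 0)
    (by linarith) (fun _ => hasDerivAt_const _ _)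
    (fun r hr hfr => (hdecr r (ht₀.trans (ht₀₁.trans hr.1)) (by rw [hfr]; linarith)).trans
      (by linarith))
    ⟨ht₂, le_rfl⟩
  linarith

theorem eq_mul_exp_integral_of_hasDerivAt {x g : ℝ → ℝ} (hg : Continuous g) {s t : ℝ}
    (hst : s ≤ t) (hx : ∀ r ∈ Icc s t, HasDerivAt x (x r * g r) r) :
    x t = x s * Real.exp (∫ r in s..t, g r) := by
  have hG : ∀ r, HasDerivAt (fun w => ∫ v in s..w, g v) (g r) r := fun r =>
    (hg.integral_hasStrictDerivAt s r).hasDerivAt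
  have hconst := constant_of_has_deriv_right_zero
    (f := fun r => x r * Real.exp (-∫ v in s..r, g v)) (a := s) (b := t)
    (fun r hr => ((hx r hr).continuousAt.mul (hG r).fun_neg.exp.continuousAt).continuousWithinAt)
    (fun r hr => by
      have := (hx r (Ico_subset_Icc_self hr)).fun_mul (hG r).fun_neg.exp
      convert this.hasDerivWithinAt using 1
      ring)
    t ⟨hst, le_rfl⟩
  simp only [intervalIntegral.integral_same, neg_zero, Real.exp_zero, mul_one] at hconst
  rw [← hconst, mul_assoc, ← Real.exp_add, neg_add_cancel, Real.exp_zero, mul_one]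

theorem tendsto_zero_of_limsup_eq_zero {α : Type*} {l : Filter α} {f : α → ℝ}
    (h0 : ∀ a, 0 ≤ f a) (hf : IsBoundedUnder (· ≤ ·) l f) (h : limsup f l = 0) :
    Tendsto f l (𝓝 0) :=
  tendsto_order.2 ⟨fun _ ha => Eventually.of_forall fun a => ha.trans_le (h0 a),
    fun _ ha => eventually_lt_of_limsup_lt (h ▸ ha) hf⟩

theorem nonpos_of_forall_sub_lt_mul {L C δ : ℝ} (hδ : 0 < δ)
    (h : ∀ ε, 0 < ε → ε ≤ δ → L - ε < C * ε) : L ≤ 0 := by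
  have hlim : Tendsto (fun ε => (C + 1) * ε) (𝓝[>] 0) (𝓝 0) := by
    simpa using ((continuous_const_mul (C + 1)).tendsto 0).mono_left nhdsWithin_le_nhds
  refine ge_of_tendsto hlim ?_
  filter_upwards [Ioc_mem_nhdsGT hδ] with ε ⟨hε, hεδ⟩
  linarith [h ε hε hεδ]

namespace LinearControl

variable {x u : ℝ → ℝ} {e d : ℝ}

theorem hasDerivAt_mul_exp {r : ℝ} (hu : HasDerivAt u (-e * u r + d * x r) r) :
    HasDerivAt (fun w => u w * Real.exp (e * w)) (d * (x r * Real.exp (e * r))) r :=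
  (hu.fun_mul ((hasDerivAt_id' r).const_mul e).exp).congr_deriv (by ring)

theorem mul_exp_eq_add_integral (hx : Continuous x) {s t : ℝ} (hst : s ≤ t)
    (hu : ∀ r ∈ Icc s t, HasDerivAt u (-e * u r + d * x r) r) :
    u t * Real.exp (e * t) =
      u s * Real.exp (e * s) + d * ∫ r in s..t, x r * Real.exp (e * r) := by
  have hcont : Continuous fun r => d * (x r * Real.exp (e * r)) := by fun_prop
  have h := intervalIntegral.integral_eq_sub_of_hasDerivAt
    (fun r hr => hasDerivAt_mul_exp (hu r (uIcc_of_le hst ▸ hr)))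
    (hcont.intervalIntegrable s t)
  rw [intervalIntegral.integral_const_mul] at h
  linarith

theorem integral_le_exp_mul (hx : Continuous x) (hx0 : ∀ r, 0 ≤ x r)
    (he : 0 ≤ e) (hd : 0 ≤ d) {a b t : ℝ} (hab : a ≤ b) (hbt : b ≤ t)
    (hu : ∀ r ∈ Icc a t, HasDerivAt u (-e * u r + d * x r) r) (hua : 0 ≤ u a) :
    d * ∫ r in a..b, x r ≤ Real.exp (e * (t - a)) * u t := by
  have hcont : Continuous fun r => x r * Real.exp (e * r) := by fun_prop
  have hint : Real.exp (e * a) * ∫ r in a..b, x r ≤ ∫ r in a..t, x r * Real.exp (e * r) :=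
    calc Real.exp (e * a) * ∫ r in a..b, x r
        = ∫ r in a..b, x r * Real.exp (e * a) := by
          rw [← intervalIntegral.integral_const_mul]; simp_rw [mul_comm]
      _ ≤ ∫ r in a..b, x r * Real.exp (e * r) :=
          intervalIntegral.integral_mono_on hab ((hx.mul continuous_const).intervalIntegrable _ _)
            (hcont.intervalIntegrable _ _) fun r hr =>
            mul_le_mul_of_nonneg_left (Real.exp_le_exp.2 (by nlinarith [hr.1])) (hx0 r)
      _ ≤ ∫ r in a..t, x r * Real.exp (e * r) :=
          intervalIntegral.integral_mono_interval le_rfl hab hbt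
            (Eventually.of_forall fun r => mul_nonneg (hx0 r) (Real.exp_pos _).le)
            (hcont.intervalIntegrable _ _)
  have hvoc := mul_exp_eq_add_integral hx (hab.trans hbt) hu
  rw [mul_sub, Real.exp_sub, div_mul_eq_mul_div, le_div_iff₀ (Real.exp_pos _)]
  nlinarith [mul_le_mul_of_nonneg_left hint hd, mul_nonneg hua (Real.exp_pos (e * a)).le]

theorem pos (hu_cont : Continuous u)
    (hu : ∀ r > 0, HasDerivAt u (-e * u r + d * x r) r) (hx0 : ∀ r, 0 ≤ x r) (hd : 0 ≤ d)
    (h0 : 0 < u 0) {t : ℝ} (ht : 0 ≤ t) : 0 < u t := by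
  have hmono : MonotoneOn (fun w => u w * Real.exp (e * w)) (Ici 0) :=
    monotoneOn_of_hasDerivWithinAt_nonneg (convex_Ici 0) (by fun_prop)
      (fun r hr => (hasDerivAt_mul_exp
        (hu r (by simpa using hr))).hasDerivWithinAt)
      (fun r _ => mul_nonneg hd (mul_nonneg (hx0 r) (Real.exp_pos _).le))
  have h := hmono self_mem_Ici ht ht
  simp only [mul_zero, Real.exp_zero, mul_one] at h
  exact pos_of_mul_pos_left (h0.trans_le h) (Real.exp_pos _).le

theorem le_mul_exp_add (he : 0 < e) (hd : 0 ≤ d) {s t X : ℝ} (hst : s ≤ t)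
    (hX0 : 0 ≤ X) (hX : ∀ r ∈ Icc s t, x r ≤ X)
    (hu : ∀ r ∈ Icc s t, HasDerivAt u (-e * u r + d * x r) r) :
    u t ≤ u s * Real.exp (-(e * (t - s))) + d * X / e := by
  set k := d * X / e
  have hderiv : ∀ r ∈ Icc s t, HasDerivAt (fun w => (u w - k) * Real.exp (e * w))
      ((d * x r - d * X) * Real.exp (e * r)) r := fun r hr =>
    (((hu r hr).sub_const k).fun_mul ((hasDerivAt_id' r).const_mul e).exp).congr_deriv
      (by simp only [k]; field_simp; ring)
  have hanti : AntitoneOn (fun w => (u w - k) * Real.exp (e * w)) (Icc s t) :=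
    antitoneOn_of_hasDerivWithinAt_nonpos (convex_Icc s t)
      (fun r hr => (hderiv r hr).continuousAt.continuousWithinAt)
      (fun r hr => (hderiv r (interior_subset hr)).hasDerivWithinAt)
      (fun r hr => mul_nonpos_of_nonpos_of_nonneg
        (by nlinarith [hX r (interior_subset hr)]) (Real.exp_pos _).le)
  have h := hanti ⟨le_rfl, hst⟩ ⟨hst, le_rfl⟩ hst
  have hexp : Real.exp (e * s) = Real.exp (-(e * (t - s))) * Real.exp (e * t) := by
    rw [← Real.exp_add]; ring_nf
  dsimp only at h
  rw [hexp, ← mul_assoc] at h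
  have h' := le_of_mul_le_mul_right h (Real.exp_pos _)
  have : 0 ≤ k * Real.exp (-(e * (t - s))) := mul_nonneg (by positivity) (Real.exp_pos _).le
  nlinarith

theorem tendsto_zero (he : 0 < e) (hd : 0 ≤ d)
    (hu : ∀ r > 0, HasDerivAt u (-e * u r + d * x r) r) (hu0 : ∀ r, 0 ≤ u r)
    (hx : Tendsto x atTop (𝓝 0)) : Tendsto u atTop (𝓝 0) := by
  refine tendsto_order.2 ⟨fun a ha => Eventually.of_forall fun t => ha.trans_le (hu0 t),
    fun ε hε => ?_⟩
  obtain ⟨X, hX0, hXε⟩ := exists_pos_mul_lt (half_pos hε) (d / e)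
  obtain ⟨T, hT⟩ := eventually_atTop.1 (hx.eventually (gt_mem_nhds hX0))
  set s := max T 1
  have hdecay : Tendsto (fun t => u s * Real.exp (-(e * (t - s)))) atTop (𝓝 0) := by
    simpa [← sub_eq_add_neg] using (Real.tendsto_exp_atBot.comp (tendsto_neg_atTop_atBot.comp
      ((tendsto_atTop_add_const_right _ (-s) tendsto_id).const_mul_atTop he))).const_mul (u s)
  filter_upwards [hdecay.eventually (gt_mem_nhds (half_pos hε)), eventually_ge_atTop s]
    with t ht hst
  have := le_mul_exp_add he hd hst hX0.le
    (fun r hr => (hT r ((le_max_left T 1).trans hr.1)).le)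
    (fun r hr => hu r (lt_of_lt_of_le one_pos ((le_max_right T 1).trans hr.1)))
  have : d * X / e = d / e * X := by ring
  linarith

end LinearControl

/-- The `i`-th equation in the one-sided form used by the estimates: `A = aᵢᵢ⁻`, `c = cᵢ⁰`, the
delayed control term is dropped, and the input `P` collects `bᵢ` and the competitor's
influence `aᵢⱼ⁻ xⱼ(t - τᵢⱼ)`. -/
structure ControlledSpecies (x u g P : ℝ → ℝ) (μ A τ c e d : ℝ) : Prop where
  continuous_x : Continuous x
  continuous_u : Continuous u
  continuous_g : Continuous g
  x_nonneg : ∀ t, 0 ≤ x t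
  u_nonneg : ∀ t, 0 ≤ u t
  hasDerivAt_x : ∀ t > 0, HasDerivAt x (x t * g t) t
  hasDerivAt_u : ∀ t > 0, HasDerivAt u (-e * u t + d * x t) t
  rate_le : ∀ t > 0, g t ≤ P t - μ * x t + A * x (t - τ) - c * u t
  τ_nonneg : 0 ≤ τ
  A_nonneg : 0 ≤ A
  A_le_μ : A ≤ μ
  c_pos : 0 < c
  e_pos : 0 < e
  d_pos : 0 < d

theorem controlledSpecies_of_hasDerivAt {x u y : ℝ → ℝ} {b μ a a' c₀ c₁ e d τ τ' σ : ℝ}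
    (hx : Continuous x) (hu : Continuous u) (hy : Continuous y)
    (hx0 : ∀ t, 0 ≤ x t) (hu0 : ∀ t, 0 ≤ u t) (hy0 : ∀ t, 0 ≤ y t)
    (hdx : ∀ t > 0, HasDerivAt x (x t * (b - μ * x t - a * x (t - τ) - a' * y (t - τ')
      - c₀ * u t - c₁ * u (t - σ))) t)
    (hdu : ∀ t > 0, HasDerivAt u (-e * u t + d * x t) t)
    (hτ : 0 ≤ τ) (hμ : max (-a) 0 ≤ μ) (hc₀ : 0 < c₀) (hc₁ : 0 ≤ c₁) (he : 0 < e) (hd : 0 < d) :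
    ControlledSpecies x u
      (fun t => b - μ * x t - a * x (t - τ) - a' * y (t - τ') - c₀ * u t - c₁ * u (t - σ))
      (fun t => b + max (-a') 0 * y (t - τ')) μ (max (-a) 0) τ c₀ e d where
  continuous_x := hx
  continuous_u := hu
  continuous_g := by fun_prop
  x_nonneg := hx0
  u_nonneg := hu0
  hasDerivAt_x := hdx
  hasDerivAt_u := hdu
  rate_le t _ := by
    nlinarith [mul_le_mul_of_nonneg_right (le_max_left (-a) 0) (hx0 (t - τ)),
      mul_le_mul_of_nonneg_right (le_max_left (-a') 0) (hy0 (t - τ')),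
      mul_nonneg hc₁ (hu0 (t - σ))]
  τ_nonneg := hτ
  A_nonneg := le_max_right _ _
  A_le_μ := hμ
  c_pos := hc₀
  e_pos := he
  d_pos := hd

namespace ControlledSpecies

variable {x u g P y : ℝ → ℝ} {μ A τ c e d b β σ : ℝ}

theorem mul_u_le_of_isMaxOn (hs : ControlledSpecies x u g P μ A τ c e d) {t : ℝ} (ht : 0 < t)
    (hxt : 0 < x t) (hmax : IsMaxOn x (Iic t) t) : c * u t ≤ P t - (μ - A) * x t := by
  have hg : 0 ≤ g t :=
    nonneg_of_mul_nonneg_right ((hs.hasDerivAt_x t ht).nonneg_of_isMaxOn_Iic hmax) hxt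
  have hdelay : A * x (t - τ) ≤ A * x t :=
    mul_le_mul_of_nonneg_left (hmax (by simp [hs.τ_nonneg])) hs.A_nonneg
  linarith [hs.rate_le t ht]

theorem integral_le_of_u_le (hs : ControlledSpecies x u g P μ A τ c e d) {t U a b : ℝ}
    (ht : 1 + τ < t) (ha : t - (1 + τ) ≤ a) (hab : a ≤ b) (hb : b ≤ t) (hU : u t ≤ U) :
    ∫ r in a..b, x r ≤ Real.exp (e * (1 + τ)) * U / d := by
  have h := LinearControl.integral_le_exp_mul (a := t - (1 + τ)) (b := t) hs.continuous_x
    hs.x_nonneg hs.e_pos.le hs.d_pos.le (by linarith) le_rfl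
    (fun r hr => hs.hasDerivAt_u r (by linarith [hr.1])) (hs.u_nonneg (t - (1 + τ)))
  rw [sub_sub_cancel] at h
  have hsub : ∫ r in a..b, x r ≤ ∫ r in (t - (1 + τ))..t, x r :=
    intervalIntegral.integral_mono_interval ha hab hb (Eventually.of_forall hs.x_nonneg)
      (hs.continuous_x.intervalIntegrable _ _)
  rw [le_div_iff₀ hs.d_pos]
  nlinarith [mul_le_mul_of_nonneg_left hU (Real.exp_pos (e * (1 + τ))).le,
    mul_le_mul_of_nonneg_left hsub hs.d_pos.le]

theorem x_le_of_u_le (hs : ControlledSpecies x u g P μ A τ c e d) {t p U : ℝ} (ht : 1 + τ < t)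
    (hp : 0 ≤ p) (hP : ∀ r ∈ Icc (t - 1) t, P r ≤ p) (hU : u t ≤ U) :
    x t ≤ Real.exp (e * (1 + τ)) * U / d *
      Real.exp (p + A * (Real.exp (e * (1 + τ)) * U / d)) := by
  set W := Real.exp (e * (1 + τ)) * U / d
  have hτ := hs.τ_nonneg
  have hx := hs.continuous_x
  obtain ⟨s, hs_mem, hxs⟩ := exists_eq_interval_average (a := t - 1) (b := t) (by linarith)
    hx.continuousOn
  rw [uIoo_of_le (by linarith)] at hs_mem
  obtain ⟨hs₁, hs₂⟩ := hs_mem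
  rw [interval_average_eq_div, sub_sub_cancel, div_one] at hxs
  have hxW : x s ≤ W := hxs ▸ hs.integral_le_of_u_le ht (by linarith) (by linarith) le_rfl hU
  have hrate : ∫ r in s..t, g r ≤ p + A * W :=
    calc ∫ r in s..t, g r ≤ ∫ r in s..t, (p + A * x (r - τ)) :=
          intervalIntegral.integral_mono_on hs₂.le (hs.continuous_g.intervalIntegrable _ _)
            ((by fun_prop : Continuous fun r => p + A * x (r - τ)).intervalIntegrable _ _)
            fun r hr => by
              have hr0 : 0 < r := by linarith [hr.1]
              linarith [hs.rate_le r hr0, hP r ⟨by linarith [hr.1], hr.2⟩,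
                mul_nonneg (hs.A_nonneg.trans hs.A_le_μ) (hs.x_nonneg r),
                mul_nonneg hs.c_pos.le (hs.u_nonneg r)]
      _ = p * (t - s) + A * ∫ r in (s - τ)..(t - τ), x r := by
          rw [intervalIntegral.integral_add intervalIntegrable_const
            ((by fun_prop : Continuous fun r => A * x (r - τ)).intervalIntegrable _ _),
            intervalIntegral.integral_const, intervalIntegral.integral_const_mul,
            intervalIntegral.integral_comp_sub_right, smul_eq_mul, mul_comm]
      _ ≤ p + A * W := add_le_add (by nlinarith) (mul_le_mul_of_nonneg_left
          (hs.integral_le_of_u_le ht (by linarith) (by linarith) (by linarith) hU) hs.A_nonneg)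
  calc x t = x s * Real.exp (∫ r in s..t, g r) :=
        eq_mul_exp_integral_of_hasDerivAt hs.continuous_g hs₂.le
          fun r hr => hs.hasDerivAt_x r (by linarith [hr.1])
    _ ≤ W * Real.exp (p + A * W) :=
        mul_le_mul hxW (Real.exp_le_exp.2 hrate) (Real.exp_pos _).le
          ((hs.x_nonneg s).trans hxW)

theorem bddAbove_range_of_input_le (hs : ControlledSpecies x u g P μ A τ c e d) {B p : ℝ}
    (hB : ∀ t ≤ 0, x t ≤ B) (hp : 0 ≤ p) (hP : ∀ t, P t ≤ p) : BddAbove (range x) := by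
  obtain ⟨M, hM⟩ := (isCompact_Icc (a := 0) (b := 1 + τ)).bddAbove_image
    hs.continuous_x.continuousOn
  set W := Real.exp (e * (1 + τ)) * (p / c) / d
  by_contra hunb
  obtain ⟨_, ⟨T, rfl⟩, hT⟩ := not_bddAbove_iff.1 hunb (max (max B M) (W * Real.exp (p + A * W)))
  simp only [max_lt_iff] at hT
  obtain ⟨t, ⟨ht0, htT⟩, hmax⟩ := hs.continuous_x.exists_isMaxOn_Iic hB le_rfl hT.1.1
  have hxT : x T ≤ x t := hmax (mem_Iic.2 le_rfl)
  have hxt : 0 < x t := ((hs.x_nonneg 0).trans (hB 0 le_rfl)).trans_lt (hT.1.1.trans_le hxT)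
  have ht : 1 + τ < t := by
    by_contra! h
    exact (hM ⟨t, ⟨ht0.le, h⟩, rfl⟩).not_gt (hT.1.2.trans_le hxT)
  have hu : u t ≤ p / c := by
    rw [le_div_iff₀ hs.c_pos]
    nlinarith [hs.mul_u_le_of_isMaxOn ht0 hxt (hmax.on_subset (Iic_subset_Iic.2 htT)), hP t,
      mul_nonneg (sub_nonneg.2 hs.A_le_μ) hxt.le]
  exact (hs.x_le_of_u_le ht hp (fun r _ => hP r) hu).not_gt (hT.2.trans_le hxT)

theorem exists_limsup_sub_lt_mul (hs : ControlledSpecies x u g P μ A τ c e d)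
    (hbdd : BddAbove (range x))
    (hP : ∀ ε > 0, ∀ᶠ t in atTop, P t ≤ (μ - A) * limsup x atTop + ε)
    (hL : 0 < limsup x atTop) :
    ∃ C, ∀ ε, 0 < ε → ε ≤ 1 → ε ≤ limsup x atTop / 2 → limsup x atTop - ε < C * ε := by
  set L := limsup x atTop
  have hμ := hs.A_nonneg.trans hs.A_le_μ
  have hτ := hs.τ_nonneg
  set p := (μ - A) * L + 1
  have hp : 0 ≤ p := by nlinarith [hs.A_le_μ]
  set V := Real.exp (e * (1 + τ)) * ((2 + μ + A) / c) / d
  have hV : 0 ≤ V := div_nonneg (mul_nonneg (Real.exp_pos _).le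
    (div_nonneg (by linarith [hs.A_nonneg]) hs.c_pos.le)) hs.d_pos.le
  refine ⟨V * Real.exp (p + A * V), fun ε hε hε1 hεL => ?_⟩
  have hfreq : ∃ᶠ t in atTop, L - ε < x t :=
    frequently_lt_of_lt_limsup (isBoundedUnder_of ⟨0, hs.x_nonneg⟩ :
      IsBoundedUnder (· ≥ ·) atTop x).isCoboundedUnder_le (by linarith)
  have hderiv : ∀ᶠ t in atTop, HasDerivAt x (x t * g t) t :=
    (eventually_gt_atTop 0).mono hs.hasDerivAt_x
  obtain ⟨T, hT⟩ := eventually_atTop.1 ((eventually_lt_of_limsup_lt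
    (by linarith : L < L + ε) hbdd.isBoundedUnder_of_range).and (hP ε hε))
  obtain ⟨t, ⟨hxt, hdt⟩, htT⟩ := ((frequently_lt_and_neg_le_deriv
    (mul_pos hε (half_pos hL)) hderiv hfreq).and_eventually
    (eventually_gt_atTop (max T 0 + 1 + τ))).exists
  have hT0 := le_max_left T 0
  have h0 := le_max_right T 0
  have hg : -ε ≤ g t := by
    by_contra! h
    nlinarith [mul_lt_mul_of_pos_left h (show 0 < x t by linarith)]
  have hu : u t ≤ (2 + μ + A) / c * ε := by
    rw [div_mul_eq_mul_div, le_div_iff₀ hs.c_pos]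
    nlinarith [hs.rate_le t (by linarith), (hT t (by linarith)).2,
      mul_le_mul_of_nonneg_left (hT (t - τ) (by linarith)).1.le hs.A_nonneg,
      mul_le_mul_of_nonneg_left hxt.le hμ]
  have hx := hs.x_le_of_u_le (by linarith) hp
    (fun r hr => (hT r (by linarith [hr.1])).2.trans (by linarith)) hu
  rw [show Real.exp (e * (1 + τ)) * ((2 + μ + A) / c * ε) / d = V * ε by ring] at hx
  have hAV := mul_le_mul_of_nonneg_left (mul_le_of_le_one_right hV hε1) hs.A_nonneg
  calc L - ε < x t := hxt
    _ ≤ V * ε * Real.exp (p + A * (V * ε)) := hx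
    _ ≤ V * ε * Real.exp (p + A * V) :=
        mul_le_mul_of_nonneg_left (Real.exp_le_exp.2 (by linarith)) (mul_nonneg hV hε.le)
    _ = V * Real.exp (p + A * V) * ε := by ring

theorem limsup_eq_zero_of_input_le (hs : ControlledSpecies x u g P μ A τ c e d)
    (hbdd : BddAbove (range x))
    (hP : ∀ ε > 0, ∀ᶠ t in atTop, P t ≤ (μ - A) * limsup x atTop + ε) :
    limsup x atTop = 0 := by
  have hL0 : 0 ≤ limsup x atTop :=
    le_limsup_of_frequently_le (Frequently.of_forall hs.x_nonneg) hbdd.isBoundedUnder_of_range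
  refine le_antisymm (not_lt.1 fun hL => ?_) hL0
  obtain ⟨C, hC⟩ := hs.exists_limsup_sub_lt_mul hbdd hP hL
  exact (nonpos_of_forall_sub_lt_mul (lt_min one_pos (half_pos hL)) fun ε hε hεδ =>
    hC ε hε (hεδ.trans (min_le_left _ _)) (hεδ.trans (min_le_right _ _))).not_gt hL

theorem bddAbove_range_of_coupling
    (hs : ControlledSpecies x u g (fun t => b + β * y (t - σ)) μ A τ c e d)
    (hb : b ≤ 0) (hβ : 0 ≤ β) (hy : BddAbove (range y)) {B : ℝ} (hB : ∀ t ≤ 0, x t ≤ B) :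
    BddAbove (range x) := by
  obtain ⟨K, hK⟩ := hy
  exact hs.bddAbove_range_of_input_le hB (mul_nonneg hβ (le_max_right K 0)) fun t => by
    nlinarith [mul_le_mul_of_nonneg_left ((hK ⟨t - σ, rfl⟩).trans (le_max_left K 0)) hβ]

theorem limsup_eq_zero_of_coupling
    (hs : ControlledSpecies x u g (fun t => b + β * y (t - σ)) μ A τ c e d)
    (hb : b ≤ 0) (hβ : 0 ≤ β) (hy : BddAbove (range y)) (hx : BddAbove (range x))
    (hle : β * limsup y atTop ≤ (μ - A) * limsup x atTop) : limsup x atTop = 0 := by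
  refine hs.limsup_eq_zero_of_input_le hx fun ε hε => ?_
  have hδ : 0 < ε / (β + 1) := by positivity
  obtain ⟨T, hT⟩ := eventually_atTop.1 (eventually_lt_of_limsup_lt
    (lt_add_of_pos_right (limsup y atTop) hδ) hy.isBoundedUnder_of_range)
  filter_upwards [eventually_ge_atTop (T + σ)] with t ht
  have hβε : β * (ε / (β + 1)) ≤ ε := by
    rw [mul_div_assoc', div_le_iff₀ (by linarith)]
    nlinarith
  nlinarith [mul_le_mul_of_nonneg_left (hT (t - σ) (by linarith)).le hβ]

end ControlledSpecies

theorem not_mul_lt_and_mul_lt {m₁ m₂ β γ S₁ S₂ : ℝ} (hm₁ : 0 ≤ m₁) (hm₂ : 0 ≤ m₂)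
    (hS₁ : 0 ≤ S₁) (hS₂ : 0 ≤ S₂) (h : β * γ ≤ m₁ * m₂) :
    ¬(m₁ * S₁ < β * S₂ ∧ m₂ * S₂ < γ * S₁) := fun ⟨h₁, h₂⟩ => by
  have := mul_lt_mul'' h₁ h₂ (mul_nonneg hm₁ hS₁) (mul_nonneg hm₂ hS₂)
  nlinarith [mul_le_mul_of_nonneg_right h (mul_nonneg hS₁ hS₂)]

theorem eq_zero_and_eq_zero_of_imp {m₁ m₂ β γ L₁ L₂ : ℝ} (hm₁ : 0 ≤ m₁) (hm₂ : 0 ≤ m₂)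
    (hL₁ : 0 ≤ L₁) (hL₂ : 0 ≤ L₂) (h : β * γ ≤ m₁ * m₂)
    (h₁ : β * L₂ ≤ m₁ * L₁ → L₁ = 0) (h₂ : γ * L₁ ≤ m₂ * L₂ → L₂ = 0) : L₁ = 0 ∧ L₂ = 0 := by
  by_cases hc₁ : β * L₂ ≤ m₁ * L₁
  · obtain rfl := h₁ hc₁
    exact ⟨rfl, h₂ (by simpa using mul_nonneg hm₂ hL₂)⟩
  by_cases hc₂ : γ * L₁ ≤ m₂ * L₂
  · obtain rfl := h₂ hc₂
    exact absurd (by simpa using mul_nonneg hm₁ hL₁) hc₁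
  exact absurd ⟨not_le.1 hc₁, not_le.1 hc₂⟩ (not_mul_lt_and_mul_lt hm₁ hm₂ hL₁ hL₂ h)

section Competition

variable {x₁ u₁ g₁ x₂ u₂ g₂ : ℝ → ℝ}
  {μ₁ A₁ τ₁₁ c₁ e₁ d₁ μ₂ A₂ τ₂₂ c₂ e₂ d₂ b₁ b₂ β γ τ₁₂ τ₂₁ B : ℝ}

theorem bddAbove_range_or_bddAbove_range
    (h₁ : ControlledSpecies x₁ u₁ g₁ (fun t => b₁ + β * x₂ (t - τ₁₂)) μ₁ A₁ τ₁₁ c₁ e₁ d₁)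
    (h₂ : ControlledSpecies x₂ u₂ g₂ (fun t => b₂ + γ * x₁ (t - τ₂₁)) μ₂ A₂ τ₂₂ c₂ e₂ d₂)
    (hb₁ : b₁ ≤ 0) (hb₂ : b₂ ≤ 0) (hβ : 0 ≤ β) (hγ : 0 ≤ γ) (hτ₁₂ : 0 ≤ τ₁₂)
    (hτ₂₁ : 0 ≤ τ₂₁) (hprod : β * γ ≤ (μ₁ - A₁) * (μ₂ - A₂))
    (hB₁ : ∀ t ≤ 0, x₁ t ≤ B) (hB₂ : ∀ t ≤ 0, x₂ t ≤ B)
    (hu₁ : ∀ t > 0, 0 < u₁ t) (hu₂ : ∀ t > 0, 0 < u₂ t) :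
    BddAbove (range x₁) ∨ BddAbove (range x₂) := by
  by_contra! h
  obtain ⟨_, ⟨T₁, rfl⟩, hT₁⟩ := not_bddAbove_iff.1 h.1 (max B 0)
  obtain ⟨_, ⟨T₂, rfl⟩, hT₂⟩ := not_bddAbove_iff.1 h.2 (max B 0)
  rw [max_lt_iff] at hT₁ hT₂
  obtain ⟨t₁, ⟨ht₁, ht₁T⟩, hmax₁⟩ :=
    h₁.continuous_x.exists_isMaxOn_Iic hB₁ (le_max_left T₁ T₂) hT₁.1
  obtain ⟨t₂, ⟨ht₂, ht₂T⟩, hmax₂⟩ :=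
    h₂.continuous_x.exists_isMaxOn_Iic hB₂ (le_max_right T₁ T₂) hT₂.1
  have hx₁ : 0 < x₁ t₁ := hT₁.2.trans_le (hmax₁ (mem_Iic.2 (le_max_left T₁ T₂)))
  have hx₂ : 0 < x₂ t₂ := hT₂.2.trans_le (hmax₂ (mem_Iic.2 (le_max_right T₁ T₂)))
  have hc₁ := h₁.mul_u_le_of_isMaxOn ht₁ hx₁ (hmax₁.on_subset (Iic_subset_Iic.2 ht₁T))
  have hc₂ := h₂.mul_u_le_of_isMaxOn ht₂ hx₂ (hmax₂.on_subset (Iic_subset_Iic.2 ht₂T))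
  have hcross₁ : β * x₂ (t₁ - τ₁₂) ≤ β * x₂ t₂ :=
    mul_le_mul_of_nonneg_left (hmax₂ (mem_Iic.2 (by linarith))) hβ
  have hcross₂ : γ * x₁ (t₂ - τ₂₁) ≤ γ * x₁ t₁ :=
    mul_le_mul_of_nonneg_left (hmax₁ (mem_Iic.2 (by linarith))) hγ
  refine not_mul_lt_and_mul_lt (sub_nonneg.2 h₁.A_le_μ) (sub_nonneg.2 h₂.A_le_μ) hx₁.le hx₂.le
    hprod ⟨?_, ?_⟩
  · nlinarith [mul_pos h₁.c_pos (hu₁ t₁ ht₁)]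
  · nlinarith [mul_pos h₂.c_pos (hu₂ t₂ ht₂)]

theorem tendsto_zero_of_competition
    (h₁ : ControlledSpecies x₁ u₁ g₁ (fun t => b₁ + β * x₂ (t - τ₁₂)) μ₁ A₁ τ₁₁ c₁ e₁ d₁)
    (h₂ : ControlledSpecies x₂ u₂ g₂ (fun t => b₂ + γ * x₁ (t - τ₂₁)) μ₂ A₂ τ₂₂ c₂ e₂ d₂)
    (hb₁ : b₁ ≤ 0) (hb₂ : b₂ ≤ 0) (hβ : 0 ≤ β) (hγ : 0 ≤ γ) (hτ₁₂ : 0 ≤ τ₁₂)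
    (hτ₂₁ : 0 ≤ τ₂₁) (hprod : β * γ ≤ (μ₁ - A₁) * (μ₂ - A₂))
    (hB₁ : ∀ t ≤ 0, x₁ t ≤ B) (hB₂ : ∀ t ≤ 0, x₂ t ≤ B)
    (hu₁ : ∀ t > 0, 0 < u₁ t) (hu₂ : ∀ t > 0, 0 < u₂ t) :
    Tendsto x₁ atTop (𝓝 0) ∧ Tendsto x₂ atTop (𝓝 0) := by
  obtain ⟨hbdd₁, hbdd₂⟩ : BddAbove (range x₁) ∧ BddAbove (range x₂) := by
    rcases bddAbove_range_or_bddAbove_range h₁ h₂ hb₁ hb₂ hβ hγ hτ₁₂ hτ₂₁ hprod hB₁ hB₂ hu₁ hu₂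
      with h | h
    · exact ⟨h, h₂.bddAbove_range_of_coupling hb₂ hγ h hB₂⟩
    · exact ⟨h₁.bddAbove_range_of_coupling hb₁ hβ h hB₁, h⟩
  obtain ⟨hL₁, hL₂⟩ := eq_zero_and_eq_zero_of_imp (sub_nonneg.2 h₁.A_le_μ)
    (sub_nonneg.2 h₂.A_le_μ)
    (le_limsup_of_frequently_le (Frequently.of_forall h₁.x_nonneg) hbdd₁.isBoundedUnder_of_range)
    (le_limsup_of_frequently_le (Frequently.of_forall h₂.x_nonneg) hbdd₂.isBoundedUnder_of_range)
    hprod (h₁.limsup_eq_zero_of_coupling hb₁ hβ hbdd₂ hbdd₁)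
    (h₂.limsup_eq_zero_of_coupling hb₂ hγ hbdd₁ hbdd₂)
  exact ⟨tendsto_zero_of_limsup_eq_zero h₁.x_nonneg hbdd₁.isBoundedUnder_of_range hL₁,
    tendsto_zero_of_limsup_eq_zero h₂.x_nonneg hbdd₂.isBoundedUnder_of_range hL₂⟩

end Competition

section Equilibrium

variable {l1 l2 a11 a12 a21 a22 b1 b2 d1 d2 e1 e2 : ℝ}

theorem saturatedEquilibrium2_zero (hb1 : b1 ≤ 0) (hb2 : b2 ≤ 0) :
    SaturatedEquilibrium2 l1 l2 a11 a12 a21 a22 b1 b2 d1 d2 e1 e2 0 0 0 0 :=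
  ⟨le_rfl, le_rfl, by simp, by simp, Or.inr ⟨rfl, by simpa⟩, Or.inr ⟨rfl, by simpa⟩⟩

theorem SaturatedEquilibrium2.eq_zero {y1 v1 y2 v2 : ℝ}
    (h : SaturatedEquilibrium2 l1 l2 a11 a12 a21 a22 b1 b2 d1 d2 e1 e2 y1 v1 y2 v2)
    (h11 : 0 < l1 + a11) (h22 : 0 < l2 + a22) (hdet : 0 < (l1 + a11) * (l2 + a22) - a12 * a21)
    (hb1 : b1 ≤ 0) (hb2 : b2 ≤ 0) : y1 = 0 ∧ v1 = 0 ∧ y2 = 0 ∧ v2 = 0 := by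
  obtain ⟨-, -, rfl, rfl, h1, h2⟩ := h
  obtain ⟨rfl, rfl⟩ : y1 = 0 ∧ y2 = 0 := by
    rcases h1 with ⟨hy1, e1⟩ | ⟨rfl, -⟩ <;> rcases h2 with ⟨hy2, e2⟩ | ⟨rfl, -⟩
    · have hM1 : (l1 + a11) * y1 ≤ -(a12 * y2) := by linarith
      have hM2 : (l2 + a22) * y2 ≤ -(a21 * y1) := by linarith
      nlinarith [mul_le_mul hM1 hM2 (mul_pos h22 hy2).le ((mul_pos h11 hy1).le.trans hM1),
        mul_pos hdet (mul_pos hy1 hy2)]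
    · nlinarith [mul_pos h11 hy1]
    · nlinarith [mul_pos h22 hy2]
    · exact ⟨rfl, rfl⟩
  simp

theorem planar_extinction_general
    (b1 b2 mu1 mu2 a11 a12 a21 a22 c10 c11 c20 c21 d1 d2 e1 e2
      t11 t12 t21 t22 s1 s2 : ℝ)
    (hc10 : 0 < c10) (hc20 : 0 < c20)
    (hc11 : 0 ≤ c11) (hc21 : 0 ≤ c21) (hd1 : 0 < d1) (hd2 : 0 < d2)
    (he1 : 0 < e1) (he2 : 0 < e2)
    (ht : 0 ≤ t11 ∧ 0 ≤ t12 ∧ 0 ≤ t21 ∧ 0 ≤ t22 ∧ 0 ≤ s1 ∧ 0 ≤ s2)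
    (l1 l2 : ℝ)
    (hdet : 0 < (l1 + a11) * (l2 + a22) - a12 * a21)
    (h11 : 0 < l1 + a11) (h22 : 0 < l2 + a22)
    (hb1 : b1 ≤ 0) (hb2 : b2 ≤ 0) :
    (SaturatedEquilibrium2 l1 l2 a11 a12 a21 a22 b1 b2 d1 d2 e1 e2 0 0 0 0 ∧
      ∀ y1 v1 y2 v2 : ℝ,
        SaturatedEquilibrium2 l1 l2 a11 a12 a21 a22 b1 b2 d1 d2 e1 e2 y1 v1 y2 v2 →
        y1 = 0 ∧ v1 = 0 ∧ y2 = 0 ∧ v2 = 0) ∧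
    ((0 ≤ mu1 - max (-a11) 0 ∧ 0 ≤ mu2 - max (-a22) 0 ∧
        max (-a12) 0 * max (-a21) 0 ≤ (mu1 - max (-a11) 0) * (mu2 - max (-a22) 0)) →
      ∀ x1 u1 x2 u2 : ℝ → ℝ,
        AdmissibleSolution2 b1 b2 mu1 mu2 a11 a12 a21 a22 c10 c11 c20 c21
          d1 d2 e1 e2 t11 t12 t21 t22 s1 s2 x1 u1 x2 u2 →
        Tendsto x1 atTop (𝓝 0) ∧ Tendsto u1 atTop (𝓝 0) ∧
        Tendsto x2 atTop (𝓝 0) ∧ Tendsto u2 atTop (𝓝 0)) := by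
  obtain ⟨ht11, ht12, ht21, ht22, -, -⟩ := ht
  refine ⟨⟨saturatedEquilibrium2_zero hb1 hb2,
    fun _ _ _ _ h => h.eq_zero h11 h22 hdet hb1 hb2⟩, ?_⟩
  rintro ⟨hA1, hA2, hprod⟩ x1 u1 x2 u2
    ⟨hx1, hu1, hx2, hu2, hnn, ⟨B, hB⟩, -, hu10, -, hu20, hdx1, hdu1, hdx2, hdu2⟩
  have hs1 := controlledSpecies_of_hasDerivAt hx1 hu1 hx2 (hnn · |>.1) (hnn · |>.2.1)
    (hnn · |>.2.2.1) hdx1 hdu1 ht11 (by linarith) hc10 hc11 he1 hd1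
  have hdx2' : ∀ t > 0, HasDerivAt x2 (x2 t * (b2 - mu2 * x2 t - a22 * x2 (t - t22)
      - a21 * x1 (t - t21) - c20 * u2 t - c21 * u2 (t - s2))) t :=
    fun t ht => (hdx2 t ht).congr_deriv (by ring)
  have hs2 := controlledSpecies_of_hasDerivAt hx2 hu2 hx1 (hnn · |>.2.2.1) (hnn · |>.2.2.2)
    (hnn · |>.1) hdx2' hdu2 ht22 (by linarith) hc20 hc21 he2 hd2
  obtain ⟨hlim1, hlim2⟩ := tendsto_zero_of_competition hs1 hs2 hb1 hb2 (le_max_right _ _)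
    (le_max_right _ _) ht12 ht21 hprod (fun t ht => (hB t ht).1) (fun t ht => (hB t ht).2.2.1)
    (fun t ht => LinearControl.pos hu1 hdu1 hs1.x_nonneg hd1.le hu10 ht.le)
    (fun t ht => LinearControl.pos hu2 hdu2 hs2.x_nonneg hd2.le hu20 ht.le)
  exact ⟨hlim1, LinearControl.tendsto_zero he1 hd1.le hdu1 hs1.u_nonneg hlim1,
    hlim2, LinearControl.tendsto_zero he2 hd2.le hdu2 hs2.u_nonneg hlim2⟩

/-- Proposition 5.1(i): under (5.2), if `b₁ ≤ 0` and `b₂ ≤ 0`, then `(0,0,0,0)` is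
the saturated equilibrium of (5.1); in that case, if `μᵢ - aᵢᵢ⁻ ≥ 0` and
`(μ₁ - a₁₁⁻)(μ₂ - a₂₂⁻) ≥ a₁₂⁻ a₂₁⁻`, every admissible solution converges to `0`. -/
theorem planar_extinction
    (b1 b2 mu1 mu2 a11 a12 a21 a22 c10 c11 c20 c21 d1 d2 e1 e2
      t11 t12 t21 t22 s1 s2 : ℝ)
    (hmu1 : 0 < mu1) (hmu2 : 0 < mu2) (hc10 : 0 < c10) (hc20 : 0 < c20)
    (hc11 : 0 ≤ c11) (hc21 : 0 ≤ c21) (hd1 : 0 < d1) (hd2 : 0 < d2)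
    (he1 : 0 < e1) (he2 : 0 < e2)
    (ht : 0 ≤ t11 ∧ 0 ≤ t12 ∧ 0 ≤ t21 ∧ 0 ≤ t22 ∧ 0 ≤ s1 ∧ 0 ≤ s2)
    (l1 l2 : ℝ) (hl1 : l1 = mu1 + (c10 + c11) * d1 / e1)
    (hl2 : l2 = mu2 + (c20 + c21) * d2 / e2)
    (hdet : 0 < (l1 + a11) * (l2 + a22) - a12 * a21)
    (h11 : 0 < l1 + a11) (h22 : 0 < l2 + a22)
    (hb1 : b1 ≤ 0) (hb2 : b2 ≤ 0) :
    (SaturatedEquilibrium2 l1 l2 a11 a12 a21 a22 b1 b2 d1 d2 e1 e2 0 0 0 0 ∧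
      ∀ y1 v1 y2 v2 : ℝ,
        SaturatedEquilibrium2 l1 l2 a11 a12 a21 a22 b1 b2 d1 d2 e1 e2 y1 v1 y2 v2 →
        y1 = 0 ∧ v1 = 0 ∧ y2 = 0 ∧ v2 = 0) ∧
    ((0 ≤ mu1 - max (-a11) 0 ∧ 0 ≤ mu2 - max (-a22) 0 ∧
        max (-a12) 0 * max (-a21) 0 ≤ (mu1 - max (-a11) 0) * (mu2 - max (-a22) 0)) →
      ∀ x1 u1 x2 u2 : ℝ → ℝ,
        AdmissibleSolution2 b1 b2 mu1 mu2 a11 a12 a21 a22 c10 c11 c20 c21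
          d1 d2 e1 e2 t11 t12 t21 t22 s1 s2 x1 u1 x2 u2 →
        Tendsto x1 atTop (𝓝 0) ∧ Tendsto u1 atTop (𝓝 0) ∧
        Tendsto x2 atTop (𝓝 0) ∧ Tendsto u2 atTop (𝓝 0)) :=
  planar_extinction_general b1 b2 mu1 mu2 a11 a12 a21 a22 c10 c11 c20 c21 d1 d2 e1 e2 t11 t12 t21
    t22 s1 s2 hc10 hc20 hc11 hc21 hd1 hd2 he1 he2 ht l1 l2 hdet h11 h22 hb1 hb2
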